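/- Let $(R,\mathfrak{m})$ be a regular local ring and let $f_1, f_2 \in \mathfrak{m}$ be coprime elements (i.e., they have no common irreducible factor). Then the local hypersurface ring $R[t]_{(t)}/(t^2 - f_1 f_2)$ is not a unique factorization domain. -/

import Mathlib

open Polynomial IsLocalRing

/-- A Noetherian local ring is *regular* if its maximal ideal can be generated by
`dim R` elements. -/
def IsRegularLocal (R : Type*) [CommRing R] [IsLocalRing R] : Prop :=
  IsNoetherianRing R ∧
    ∃ s : Finset R, Ideal.span (s : Set R) = maximalIdeal R ∧
      (s.card : WithBot (WithTop ℕ)) = ringKrullDim R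

/-- Two elements of a commutative ring have *no common factor* (are coprime) if no
irreducible element divides both. -/
def NoCommonIrreducibleFactor {R : Type*} [CommRing R] (f₁ f₂ : R) : Prop :=
  ∀ p : R, Irreducible p → p ∣ f₁ → ¬ p ∣ f₂

/-- The local hypersurface ring `R[t]_{(𝔪,t)} / (t² - g)`, where `P = (𝔪, t)` is the
prime ideal of `R[t]` generated by the maximal ideal of `R` together with `t`. -/
def HypersurfaceRing (R : Type*) [CommRing R] (P : Ideal (Polynomial R)) [P.IsPrime]
    (g : Polynomial R) : Type _ :=
  Localization.AtPrime P ⧸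
    Ideal.span {algebraMap (Polynomial R) (Localization.AtPrime P) g}

noncomputable instance (R : Type*) [CommRing R] (P : Ideal (Polynomial R)) [P.IsPrime]
    (g : Polynomial R) : CommRing (HypersurfaceRing R P g) := by
  unfold HypersurfaceRing; infer_instance

/-!
Let `θ` be the image of `t`. For every ideal `I` with `f₁f₂ ∈ I ⊆ 𝔪`, sending `t ↦ ε` defines a
local homomorphism from the hypersurface ring to the dual numbers `(R ⧸ I)[ε]`: an element outside
`(𝔪, t)` has a unit constant term. As `ε` is irreducible over a local ring, `θ` is irreducible
(take `I = 𝔪`). But `θ² = f₁f₂`, and `θ ∣ fᵢ` would make `ε` divide `fᵢ` in `(R ⧸ (f₁f₂))[ε]`,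
i.e. `fᵢ ∈ (f₁f₂)`, which forces `fᵢ = 0` because the other factor lies in `𝔪`; then `θ² = 0`,
impossible in a domain. So `θ` is irreducible but not prime.
-/

theorem Polynomial.span_X_union_C_image_eq_comap {R : Type*} [CommRing R] (I : Ideal R) :
    Ideal.span ({X} ∪ C '' (I : Set R)) = I.comap constantCoeff := by
  have hI : (I.map C).map constantCoeff = I := by
    rw [Ideal.map_map,
      show constantCoeff.comp C = RingHom.id R from RingHom.ext fun _ => coeff_C_zero, Ideal.map_id]
  conv_rhs => rw [← hI, Ideal.comap_map_of_surjective _ (constantCoeff_surjective (R := R)),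
    ← RingHom.ker_eq_comap_bot, ker_constantCoeff]
  rw [Ideal.span_union, sup_comm]
  rfl

theorem IsLocalRing.eq_zero_of_mem_span_mul {R : Type*} [CommRing R] [IsLocalRing R] {a b : R}
    (hb : b ∈ maximalIdeal R) (ha : a ∈ Ideal.span {a * b}) : a = 0 := by
  obtain ⟨r, hr⟩ := Ideal.mem_span_singleton'.mp ha
  have hu : IsUnit (1 - b * r) :=
    isUnit_one_sub_self_of_mem_nonunits _ (Ideal.mul_mem_right _ _ hb)
  exact (hu.mul_left_eq_zero).mp (by linear_combination -hr)

theorem IsLocalRing.isUnit_quotient_mk_iff {R : Type*} [CommRing R] [IsLocalRing R] {I : Ideal R}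
    (hI : I ≤ maximalIdeal R) (r : R) :
    IsUnit (Ideal.Quotient.mk I r) ↔ r ∉ maximalIdeal R := by
  have : Nontrivial (R ⧸ I) :=
    Ideal.Quotient.nontrivial_iff.mpr (ne_top_of_le_ne_top (maximalIdeal.isMaximal R).ne_top hI)
  have := IsLocalHom.of_surjective _ (Ideal.Quotient.mk_surjective (I := I))
  rw [isUnit_map_iff, notMem_maximalIdeal]

namespace DualNumber

theorem irreducible_eps {S : Type*} [CommRing S] [IsLocalRing S] :
    Irreducible (ε : DualNumber S) := by
  refine ⟨fun h => ?_, fun x y hxy => ?_⟩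
  · simpa using TrivSqZeroExt.isUnit_iff_isUnit_fst.mp h
  have hsnd := congrArg TrivSqZeroExt.snd hxy
  simp only [snd_eps, TrivSqZeroExt.snd_mul, smul_eq_mul, MulOpposite.smul_eq_mul_unop,
    MulOpposite.unop_op] at hsnd
  simp only [TrivSqZeroExt.isUnit_iff_isUnit_fst]
  rcases IsLocalRing.isUnit_or_isUnit_of_add_one hsnd.symm with h | h
  · exact Or.inl (isUnit_of_mul_isUnit_left h)
  · exact Or.inr (isUnit_of_mul_isUnit_right h)

theorem fst_aeval_eps {R A : Type*} [CommRing R] [CommRing A] [Algebra R A] (p : R[X]) :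
    (aeval (ε : A[ε]) p).fst = algebraMap R A (p.coeff 0) := by
  rw [← TrivSqZeroExt.fstHom_apply R, ← aeval_algHom_apply, TrivSqZeroExt.fstHom_apply, fst_eps,
    coeff_zero_eq_aeval_zero']

theorem isUnit_aeval_eps_iff {R : Type*} [CommRing R] [IsLocalRing R] {I : Ideal R}
    (hI : I ≤ maximalIdeal R) (p : R[X]) :
    IsUnit (aeval (ε : (R ⧸ I)[ε]) p) ↔ p.coeff 0 ∉ maximalIdeal R := by
  rw [TrivSqZeroExt.isUnit_iff_isUnit_fst, fst_aeval_eps, Ideal.Quotient.algebraMap_eq,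
    isUnit_quotient_mk_iff hI]

end DualNumber

namespace HypersurfaceRing

section Lift

variable {R B : Type*} [CommRing R] [CommRing B] (P : Ideal R[X]) [P.IsPrime] (g : R[X])

noncomputable def mk : R[X] →+* HypersurfaceRing R P g :=
  (Ideal.Quotient.mk _).comp (algebraMap R[X] (Localization.AtPrime P))

theorem mk_self : mk P g g = 0 :=
  Ideal.Quotient.eq_zero_iff_mem.mpr (Ideal.mem_span_singleton_self _)

variable {P g}

theorem isUnit_mk {p : R[X]} (hp : p ∉ P) : IsUnit (mk P g p) :=
  (IsLocalization.map_units (Localization.AtPrime P) (⟨p, hp⟩ : P.primeCompl)).map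
    (Ideal.Quotient.mk _)

theorem exists_mul_mk_eq_mk (x : HypersurfaceRing R P g) :
    ∃ p s, s ∉ P ∧ x * mk P g s = mk P g p := by
  obtain ⟨y, rfl⟩ := Ideal.Quotient.mk_surjective x
  obtain ⟨⟨p, s⟩, h⟩ := IsLocalization.surj P.primeCompl y
  exact ⟨p, s, s.2, (map_mul (Ideal.Quotient.mk _) y _).symm.trans (congrArg _ h)⟩

noncomputable def lift (h : R[X] →+* B) (hunit : ∀ p ∉ P, IsUnit (h p)) (hg : h g = 0) :
    HypersurfaceRing R P g →+* B :=
  Ideal.Quotient.lift _ (IsLocalization.lift fun s : P.primeCompl => hunit s s.2) <| by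
    intro x hx
    obtain ⟨c, rfl⟩ := Ideal.mem_span_singleton'.mp hx
    rw [map_mul, IsLocalization.lift_eq, hg, mul_zero]

variable (h : R[X] →+* B) (hunit : ∀ p ∉ P, IsUnit (h p)) (hg : h g = 0)

@[simp]
theorem lift_mk (p : R[X]) : lift h hunit hg (mk P g p) = h p :=
  IsLocalization.lift_eq _ p

theorem isLocalHom_lift (hnonunit : ∀ p ∈ P, ¬IsUnit (h p)) : IsLocalHom (lift h hunit hg) := by
  refine ⟨fun x hx => ?_⟩
  obtain ⟨p, s, hs, hxs⟩ := exists_mul_mk_eq_mk x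
  have hp : p ∉ P := fun hp => hnonunit p hp <| by
    rw [← lift_mk h hunit hg, ← hxs, map_mul]
    exact hx.mul (by rw [lift_mk]; exact hunit s hs)
  exact isUnit_of_mul_isUnit_left (hxs ▸ isUnit_mk hp)

end Lift

section DualNumber

open DualNumber

variable {R : Type*} [CommRing R] [IsLocalRing R] {P : Ideal R[X]} [P.IsPrime] {I : Ideal R}
  {c : R}

noncomputable def toDualNumber (hP : P = (maximalIdeal R).comap constantCoeff)
    (hI : I ≤ maximalIdeal R) (hc : c ∈ I) : HypersurfaceRing R P (X ^ 2 - C c) →+* (R ⧸ I)[ε] :=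
  lift (aeval ε).toRingHom (fun p hp => (isUnit_aeval_eps_iff hI p).mpr (by rwa [hP] at hp)) <| by
    rw [AlgHom.toRingHom_eq_coe, RingHom.coe_coe, map_sub, map_pow, aeval_X, aeval_C, pow_two,
      eps_mul_eps, TrivSqZeroExt.algebraMap_eq_inl', Ideal.Quotient.algebraMap_eq,
      Ideal.Quotient.eq_zero_iff_mem.mpr hc, TrivSqZeroExt.inl_zero, sub_zero]

@[simp]
theorem toDualNumber_mk (hP : P = (maximalIdeal R).comap constantCoeff) (hI : I ≤ maximalIdeal R)
    (hc : c ∈ I) (p : R[X]) : toDualNumber hP hI hc (mk P _ p) = aeval ε p :=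
  lift_mk _ _ _ p

instance isLocalHom_toDualNumber (hP : P = (maximalIdeal R).comap constantCoeff)
    (hI : I ≤ maximalIdeal R) (hc : c ∈ I) : IsLocalHom (toDualNumber hP hI hc) :=
  isLocalHom_lift _ _ _ fun p hp => by
    rw [hP] at hp
    rwa [AlgHom.toRingHom_eq_coe, RingHom.coe_coe, isUnit_aeval_eps_iff hI, not_not]

theorem irreducible_mk_X (hP : P = (maximalIdeal R).comap constantCoeff)
    (hc : c ∈ maximalIdeal R) : Irreducible (mk P (X ^ 2 - C c) X) := by
  let := Ideal.Quotient.field (maximalIdeal R)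
  refine Irreducible.of_map (f := toDualNumber hP le_rfl hc) ?_
  rw [toDualNumber_mk, aeval_X]
  exact irreducible_eps

theorem mem_span_of_mk_X_dvd (hP : P = (maximalIdeal R).comap constantCoeff)
    (hc : c ∈ maximalIdeal R) {a : R} (h : mk P (X ^ 2 - C c) X ∣ mk P _ (C a)) :
    a ∈ Ideal.span {c} := by
  have hI : Ideal.span {c} ≤ maximalIdeal R := (Ideal.span_singleton_le_iff_mem _).mpr hc
  have := map_dvd (toDualNumber hP hI (Ideal.mem_span_singleton_self c)) h
  rwa [toDualNumber_mk, toDualNumber_mk, aeval_X, aeval_C, ← fst_eq_zero_iff_eps_dvd,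
    TrivSqZeroExt.algebraMap_eq_inl', TrivSqZeroExt.fst_inl, Ideal.Quotient.algebraMap_eq,
    Ideal.Quotient.eq_zero_iff_mem] at this

end DualNumber

end HypersurfaceRing

open HypersurfaceRing in
theorem hypersurfaceRing_not_ufd_general
    (R : Type*) [CommRing R] [IsLocalRing R]
    (f₁ f₂ : R) (hf₁ : f₁ ∈ maximalIdeal R) (hf₂ : f₂ ∈ maximalIdeal R)
    (P : Ideal (Polynomial R))
    (hP : P = Ideal.span ({Polynomial.X} ∪ Polynomial.C '' (maximalIdeal R : Set R)))
    [P.IsPrime]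
    [IsDomain (HypersurfaceRing R P (Polynomial.X ^ 2 - Polynomial.C (f₁ * f₂)))] :
    ¬ UniqueFactorizationMonoid
        (HypersurfaceRing R P (Polynomial.X ^ 2 - Polynomial.C (f₁ * f₂))) := by
  intro _
  rw [span_X_union_C_image_eq_comap] at hP
  have hc : f₁ * f₂ ∈ maximalIdeal R := Ideal.mul_mem_right _ _ hf₁
  have hθ : Irreducible (mk P _ X) := irreducible_mk_X hP hc
  have hθ_sq : mk P _ X ^ 2 = mk P (X ^ 2 - C (f₁ * f₂)) (C (f₁ * f₂)) := by
    rw [← sub_eq_zero, ← map_pow, ← map_sub, mk_self]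
  have hdvd : mk P _ X ∣ mk P _ (C f₁) * mk P _ (C f₂) :=
    ⟨mk P _ X, by rw [← map_mul, ← C_mul, ← hθ_sq]; exact sq _⟩
  have hf : f₁ * f₂ = 0 := by
    rcases hθ.prime.dvd_or_dvd hdvd with h | h
    · exact mul_eq_zero_of_left (eq_zero_of_mem_span_mul hf₂ (mem_span_of_mk_X_dvd hP hc h)) _
    · refine mul_eq_zero_of_right _ (eq_zero_of_mem_span_mul hf₁ ?_)
      rw [mul_comm]
      exact mem_span_of_mk_X_dvd hP hc h
  apply hθ.ne_zero
  rw [← pow_eq_zero_iff two_ne_zero, hθ_sq, hf, C_0, map_zero]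

/-- Let `(R, 𝔪)` be a regular local ring and `f₁, f₂ ∈ 𝔪` coprime
elements (no common irreducible factor). Then the local hypersurface ring
`R[t]_{(t)}/(t² - f₁f₂)` — the localization of `R[t]` at the prime ideal generated by
`𝔪` and `t`, modulo `t² - f₁f₂` — is not a unique factorization domain. -/
theorem hypersurfaceRing_not_ufd
    (R : Type*) [CommRing R] [IsLocalRing R] (hreg : IsRegularLocal R)
    (f₁ f₂ : R) (hf₁ : f₁ ∈ maximalIdeal R) (hf₂ : f₂ ∈ maximalIdeal R)
    (hcop : NoCommonIrreducibleFactor f₁ f₂)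
    (P : Ideal (Polynomial R))
    (hP : P = Ideal.span ({Polynomial.X} ∪ Polynomial.C '' (maximalIdeal R : Set R)))
    [P.IsPrime]
    [IsDomain (HypersurfaceRing R P (Polynomial.X ^ 2 - Polynomial.C (f₁ * f₂)))] :
    ¬ UniqueFactorizationMonoid
        (HypersurfaceRing R P (Polynomial.X ^ 2 - Polynomial.C (f₁ * f₂))) :=
  hypersurfaceRing_not_ufd_general R f₁ f₂ hf₁ hf₂ P hP
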